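/- Let d ≥ 1, β > −1/2 and γ > −1. The map ψ(x,t) = (x, 𝔱(‖x‖,t)) is a bijection from Λ^{d+1}_{a,b,c} onto B^{d+1}₊, with inverse ψ⁻¹(y,v) = (y, sqrt((b−a)v² + a(1−‖y‖²) + c‖y‖²)). Moreover, for every measurable f on Λ^{d+1}_{a,b,c} such that f·W^{β,γ}_{a,b,c} is integrable, ∫_{Λ^{d+1}_{a,b,c}} f(x,t) W^{β,γ}_{a,b,c}(x,t) dx dt = (b−a) ∫_{B^{d+1}₊} f(ψ⁻¹(y,v)) |v|^{2β} (1−‖y‖²−v²)^{γ} dy dv. -/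

import Mathlib

open MeasureTheory

noncomputable section

/-- Euclidean space `ℝ^d`. -/
abbrev Euc (d : ℕ) := EuclideanSpace ℝ (Fin d)

/-- The domain `Λ^{d+1}_{a,b,c}`. -/
def LamD (d : ℕ) (a b c : ℝ) : Set (Euc d × ℝ) :=
  {p | 0 ≤ p.2 ∧ ‖p.1‖ ≤ 1 ∧ a + (c - a) * ‖p.1‖ ^ 2 ≤ p.2 ^ 2 ∧
       p.2 ^ 2 ≤ b + (c - b) * ‖p.1‖ ^ 2}

/-- The closed upper half-ball `B^{d+1}₊`. -/
def ballPlus (d : ℕ) : Set (Euc d × ℝ) := {p | ‖p.1‖ ^ 2 + p.2 ^ 2 ≤ 1 ∧ 0 ≤ p.2}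

/-- The function `𝔱(r,t) = sqrt((−a+(a−c)r²+t²)/(b−a))`. -/
def fraktD (a b c r t : ℝ) : ℝ :=
  Real.sqrt ((-a + (a - c) * r ^ 2 + t ^ 2) / (b - a))

/-- The map `ψ(x,t) = (x, 𝔱(‖x‖,t))`. -/
def psiD (d : ℕ) (a b c : ℝ) (p : Euc d × ℝ) : Euc d × ℝ :=
  (p.1, fraktD a b c ‖p.1‖ p.2)

/-- The inverse map `ψ⁻¹(y,v) = (y, sqrt((b−a)v² + a(1−‖y‖²) + c‖y‖²))`. -/
def psiDInv (d : ℕ) (a b c : ℝ) (p : Euc d × ℝ) : Euc d × ℝ :=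
  (p.1, Real.sqrt ((b - a) * p.2 ^ 2 + a * (1 - ‖p.1‖ ^ 2) + c * ‖p.1‖ ^ 2))

/-- The weight `W^{β,γ}_{a,b,c}` on `Λ^{d+1}_{a,b,c}`. -/
def WD (d : ℕ) (a b c β γ : ℝ) (p : Euc d × ℝ) : ℝ :=
  p.2 * ((-a + (a - c) * ‖p.1‖ ^ 2 + p.2 ^ 2) / (b - a)) ^ (β - 1 / 2) *
    ((b - (b - c) * ‖p.1‖ ^ 2 - p.2 ^ 2) / (b - a)) ^ γ

/-! The inverse map only changes the last coordinate, by `t² = (b-a)v² + a(1-‖y‖²) + c‖y‖²`,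
so its Jacobian is triangular with determinant `∂t/∂v = (b-a)v/t`; the factor `t` of the weight
cancels the denominator, and `(t² - a - (c-a)‖y‖²)/(b-a) = v²`,
`(b - (b-c)‖y‖² - t²)/(b-a) = 1 - ‖y‖² - v²` turn the rest of the weight into
`v^{2β} (1-‖y‖²-v²)^γ`. Off the null set formed by the graphs `v = 0`, `‖y‖² + v² = 1`
(resp. `t² = a + (c-a)‖x‖²`, `t² = b + (c-b)‖x‖²`) the map is a diffeomorphism of open sets,
so the change of variables formula applies. -/

theorem LinearMap.det_fst_prod {K E : Type*} [Field K] [AddCommGroup E] [Module K E]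
    [FiniteDimensional K E] (ℓ : E × K →ₗ[K] K) :
    LinearMap.det ((LinearMap.fst K E K).prod ℓ) = ℓ (0, 1) := by
  classical
  let bE := Module.finBasis K E
  let bP := bE.prod (Module.Basis.singleton Unit K)
  have hM : LinearMap.toMatrix bP bP ((LinearMap.fst K E K).prod ℓ) =
      Matrix.fromBlocks 1 0 (Matrix.of fun _ j => ℓ (bE j, 0)) (Matrix.of fun _ _ => ℓ (0, 1)) := by
    ext (i | i) (j | j) <;>
      simp [LinearMap.toMatrix_apply, bP, Matrix.one_apply, Finsupp.single_apply, eq_comm]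
  rw [← LinearMap.det_toMatrix bP, hM, Matrix.det_fromBlocks_zero₁₂]
  simp [Matrix.det_unique]

/-- The Jacobian determinant of a map `(x, t) ↦ (x, g (x, t))` is the partial derivative `∂g/∂t`. -/
theorem ContinuousLinearMap.det_fst_prod_of_hasDerivAt {𝕜 E : Type*} [NontriviallyNormedField 𝕜]
    [NormedAddCommGroup E] [NormedSpace 𝕜 E] [FiniteDimensional 𝕜 E] {g : E × 𝕜 → 𝕜}
    {g' : E × 𝕜 →L[𝕜] 𝕜} {p : E × 𝕜} {dg : 𝕜} (hg : HasFDerivAt g g' p)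
    (hdg : HasDerivAt (fun t => g (p.1, t)) dg p.2) :
    ((ContinuousLinearMap.fst 𝕜 E 𝕜).prod g').det = dg := by
  have hline : HasDerivAt (fun t : 𝕜 => (p.1, t)) ((0 : E), (1 : 𝕜)) p.2 :=
    (hasDerivAt_const _ _).prodMk (hasDerivAt_id _)
  rw [ContinuousLinearMap.det, ContinuousLinearMap.coe_prod, ContinuousLinearMap.coe_fst,
    LinearMap.det_fst_prod]
  exact (hg.comp_hasDerivAt p.2 hline).unique hdg

theorem prod_volume_setOf_sq_snd_eq_zero {α : Type*} [MeasurableSpace α] (μ : Measure α)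
    {g : α → ℝ} (hg : Measurable g) :
    μ.prod volume {p : α × ℝ | p.2 ^ 2 = g p.1} = 0 := by
  rw [Measure.measure_prod_null (measurableSet_eq_fun (by fun_prop) (by fun_prop))]
  filter_upwards with x
  refine measure_mono_null (fun t (ht : t ^ 2 = g x) => ?_)
    ((Set.toFinite {√(g x), -√(g x)}).measure_zero _)
  have h : √(g x) = |t| := by rw [← ht, Real.sqrt_sq_eq_abs]
  rcases abs_choice t with h' | h'
  · exact .inl (by rw [h, h'])
  · exact .inr (by simp [h, h'])

theorem mul_rpow_sq_sub_half {v : ℝ} (hv : 0 < v) (β : ℝ) :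
    v * (v ^ 2) ^ (β - 1 / 2) = v ^ (2 * β) := by
  rw [← Real.rpow_natCast_mul hv.le, Nat.cast_ofNat,
    show 2 * (β - 1 / 2) = 2 * β - 1 by ring, Real.rpow_sub_one hv.ne']
  field_simp

def openBallPlus (d : ℕ) : Set (Euc d × ℝ) := {p | ‖p.1‖ ^ 2 + p.2 ^ 2 < 1 ∧ 0 < p.2}

def psiDInvRadicand (a b c : ℝ) {d : ℕ} (p : Euc d × ℝ) : ℝ :=
  (b - a) * p.2 ^ 2 + a * (1 - ‖p.1‖ ^ 2) + c * ‖p.1‖ ^ 2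

section

variable {d : ℕ} {a b c : ℝ}

instance : (volume : Measure (Euc d × ℝ)).IsAddHaarMeasure :=
  Measure.prod.instIsAddHaarMeasure _ _

theorem openBallPlus_subset_ballPlus : openBallPlus d ⊆ ballPlus d :=
  fun _ hp => ⟨hp.1.le, hp.2.le⟩

theorem measurableSet_openBallPlus : MeasurableSet (openBallPlus d) :=
  ((isOpen_lt (f := fun p : Euc d × ℝ => ‖p.1‖ ^ 2 + p.2 ^ 2) (by fun_prop)
    continuous_const).inter
    (isOpen_lt continuous_const continuous_snd)).measurableSet

theorem openBallPlus_ae_eq_ballPlus : openBallPlus d =ᵐ[volume] ballPlus d := by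
  refine ae_eq_set.2 ⟨by simp [Set.sdiff_eq_empty.2 openBallPlus_subset_ballPlus], ?_⟩
  refine measure_mono_null (t := {p | p.2 ^ 2 = 0} ∪ {p | p.2 ^ 2 = 1 - ‖p.1‖ ^ 2}) ?_ ?_
  · rintro p ⟨⟨hle, h0⟩, hp⟩
    rcases h0.eq_or_lt with h0 | h0
    · exact .inl (by simp [← h0])
    · have hsphere : ¬ ‖p.1‖ ^ 2 + p.2 ^ 2 < 1 := fun h => hp ⟨h, h0⟩
      exact .inr (show p.2 ^ 2 = 1 - ‖p.1‖ ^ 2 by linarith [not_lt.1 hsphere])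
  · rw [Measure.volume_eq_prod]
    exact measure_union_null (prod_volume_setOf_sq_snd_eq_zero _ measurable_const)
      (prod_volume_setOf_sq_snd_eq_zero _ (g := fun x => 1 - ‖x‖ ^ 2) (by fun_prop))

theorem sub_mul_fraktD_sq (hab : a < b) {p : Euc d × ℝ} (hp : p ∈ LamD d a b c) :
    (b - a) * fraktD a b c ‖p.1‖ p.2 ^ 2 = p.2 ^ 2 - a - (c - a) * ‖p.1‖ ^ 2 := by
  rw [fraktD, Real.sq_sqrt (div_nonneg (by linarith [hp.2.2.1]) (sub_nonneg.2 hab.le)),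
    mul_div_cancel₀ _ (sub_pos.2 hab).ne']
  ring

theorem mapsTo_psiD (hab : a < b) : Set.MapsTo (psiD d a b c) (LamD d a b c) (ballPlus d) := by
  intro p hp
  refine ⟨?_, Real.sqrt_nonneg _⟩
  show ‖p.1‖ ^ 2 + fraktD a b c ‖p.1‖ p.2 ^ 2 ≤ 1
  nlinarith [sub_mul_fraktD_sq hab hp, hp.2.2.2]

theorem psiDInv_psiD (hab : a < b) :
    Set.LeftInvOn (psiDInv d a b c) (psiD d a b c) (LamD d a b c) := by
  intro p hp
  have key := sub_mul_fraktD_sq hab hp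
  refine Prod.ext rfl ?_
  show √((b - a) * fraktD a b c ‖p.1‖ p.2 ^ 2 + a * (1 - ‖p.1‖ ^ 2) + c * ‖p.1‖ ^ 2) = p.2
  rw [key, show p.2 ^ 2 - a - (c - a) * ‖p.1‖ ^ 2 + a * (1 - ‖p.1‖ ^ 2) + c * ‖p.1‖ ^ 2
    = p.2 ^ 2 by ring, Real.sqrt_sq hp.1]

theorem psiDInvRadicand_nonneg (ha : 0 ≤ a) (hab : a < b) (hc : 0 ≤ c) {p : Euc d × ℝ}
    (hp : p ∈ ballPlus d) : 0 ≤ psiDInvRadicand a b c p := by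
  have := hp.1
  unfold psiDInvRadicand
  nlinarith [mul_nonneg (sub_pos.2 hab).le (sq_nonneg p.2), sq_nonneg p.2, sq_nonneg ‖p.1‖]

theorem psiDInvRadicand_pos (ha : 0 ≤ a) (hab : a < b) (hc : 0 ≤ c) {p : Euc d × ℝ}
    (hp : p ∈ openBallPlus d) : 0 < psiDInvRadicand a b c p := by
  have := hp.1
  unfold psiDInvRadicand
  nlinarith [mul_pos (sub_pos.2 hab) (pow_pos hp.2 2), sq_nonneg p.2, sq_nonneg ‖p.1‖]

@[simp]
theorem psiDInv_fst (p : Euc d × ℝ) : (psiDInv d a b c p).1 = p.1 := rfl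

@[simp]
theorem psiDInv_snd (p : Euc d × ℝ) : (psiDInv d a b c p).2 = √(psiDInvRadicand a b c p) := rfl

theorem psiDInv_snd_sq (ha : 0 ≤ a) (hab : a < b) (hc : 0 ≤ c) {p : Euc d × ℝ}
    (hp : p ∈ ballPlus d) : (psiDInv d a b c p).2 ^ 2 = psiDInvRadicand a b c p :=
  Real.sq_sqrt (psiDInvRadicand_nonneg ha hab hc hp)

theorem mapsTo_psiDInv (ha : 0 ≤ a) (hab : a < b) (hc : 0 ≤ c) :
    Set.MapsTo (psiDInv d a b c) (ballPlus d) (LamD d a b c) := by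
  intro p hp
  have hT := psiDInv_snd_sq ha hab hc hp
  have hr : ‖p.1‖ ^ 2 ≤ 1 := by nlinarith [hp.1]
  unfold psiDInvRadicand at hT
  refine ⟨Real.sqrt_nonneg _, (sq_le_one_iff₀ (norm_nonneg _)).1 hr, ?_, ?_⟩
    <;> rw [psiDInv_fst]
  · nlinarith [mul_nonneg (sub_pos.2 hab).le (sq_nonneg p.2)]
  · nlinarith [mul_nonneg (sub_pos.2 hab).le (sub_nonneg.2 hp.1)]

theorem psiD_psiDInv (ha : 0 ≤ a) (hab : a < b) (hc : 0 ≤ c) :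
    Set.RightInvOn (psiDInv d a b c) (psiD d a b c) (ballPlus d) := by
  intro p hp
  have hT := psiDInv_snd_sq ha hab hc hp
  refine Prod.ext rfl ?_
  show √((-a + (a - c) * ‖p.1‖ ^ 2 + (psiDInv d a b c p).2 ^ 2) / (b - a)) = p.2
  rw [hT, psiDInvRadicand, show -a + (a - c) * ‖p.1‖ ^ 2 +
    ((b - a) * p.2 ^ 2 + a * (1 - ‖p.1‖ ^ 2) + c * ‖p.1‖ ^ 2) = (b - a) * p.2 ^ 2 by ring,
    mul_div_cancel_left₀ _ (sub_pos.2 hab).ne', Real.sqrt_sq hp.2]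

theorem psiDInv_image_openBallPlus_ae_eq (ha : 0 ≤ a) (hab : a < b) (hc : 0 ≤ c) :
    psiDInv d a b c '' openBallPlus d =ᵐ[volume] LamD d a b c := by
  refine ae_eq_set.2 ⟨by simp [Set.sdiff_eq_empty.2 ((mapsTo_psiDInv ha hab hc).mono_left
    openBallPlus_subset_ballPlus).image_subset], ?_⟩
  refine measure_mono_null (t := {p | p.2 ^ 2 = a + (c - a) * ‖p.1‖ ^ 2} ∪
    {p | p.2 ^ 2 = b + (c - b) * ‖p.1‖ ^ 2}) ?_ ?_
  · rintro p ⟨hp, hp'⟩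
    have hq := mapsTo_psiD hab hp
    have hq' : psiD d a b c p ∉ openBallPlus d := fun h => hp' ⟨_, h, psiDInv_psiD hab hp⟩
    have key := sub_mul_fraktD_sq hab hp
    rcases hq.2.eq_or_lt with h0 | h0
    · have h0 : fraktD a b c ‖p.1‖ p.2 = 0 := h0.symm
      exact .inl (show p.2 ^ 2 = a + (c - a) * ‖p.1‖ ^ 2 by rw [h0] at key; linarith)
    · have hsphere : ‖p.1‖ ^ 2 + fraktD a b c ‖p.1‖ p.2 ^ 2 = 1 :=
        le_antisymm hq.1 (not_lt.1 fun h => hq' ⟨h, h0⟩)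
      exact .inr (show p.2 ^ 2 = b + (c - b) * ‖p.1‖ ^ 2 by
        linear_combination (b - a) * hsphere - key)
  · rw [Measure.volume_eq_prod]
    exact measure_union_null
      (prod_volume_setOf_sq_snd_eq_zero _ (g := fun x => a + (c - a) * ‖x‖ ^ 2) (by fun_prop))
      (prod_volume_setOf_sq_snd_eq_zero _ (g := fun x => b + (c - b) * ‖x‖ ^ 2) (by fun_prop))

theorem differentiableAt_sqrt_psiDInvRadicand {p : Euc d × ℝ}
    (hp : psiDInvRadicand a b c p ≠ 0) :
    DifferentiableAt ℝ (fun q => √(psiDInvRadicand a b c q)) p := by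
  have hnorm : DifferentiableAt ℝ (fun q : Euc d × ℝ => ‖q.1‖ ^ 2) p :=
    differentiableAt_fst.norm_sq ℝ
  unfold psiDInvRadicand at hp ⊢
  fun_prop (disch := exact hp)

theorem hasFDerivAt_psiDInv {p : Euc d × ℝ} (hp : psiDInvRadicand a b c p ≠ 0) :
    HasFDerivAt (psiDInv d a b c) ((ContinuousLinearMap.fst ℝ (Euc d) ℝ).prod
      (fderiv ℝ (fun q => √(psiDInvRadicand a b c q)) p)) p :=
  hasFDerivAt_fst.prodMk (differentiableAt_sqrt_psiDInvRadicand hp).hasFDerivAt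

theorem det_fderiv_psiDInv {p : Euc d × ℝ} (hp : 0 < psiDInvRadicand a b c p) :
    (fderiv ℝ (psiDInv d a b c) p).det = (b - a) * p.2 / √(psiDInvRadicand a b c p) := by
  have hpartial : HasDerivAt (fun t => √(psiDInvRadicand a b c (p.1, t)))
      ((b - a) * (2 * p.2) / (2 * √(psiDInvRadicand a b c p))) p.2 := by
    simpa [psiDInvRadicand] using
      (((hasDerivAt_pow 2 p.2).const_mul (b - a)).add_const _).add_const _ |>.sqrt hp.ne'
  rw [(hasFDerivAt_psiDInv hp.ne').fderiv, ContinuousLinearMap.det_fst_prod_of_hasDerivAt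
    (differentiableAt_sqrt_psiDInvRadicand hp.ne').hasFDerivAt hpartial]
  field_simp

theorem WD_psiDInv (ha : 0 ≤ a) (hab : a < b) (hc : 0 ≤ c) (β γ : ℝ) {p : Euc d × ℝ}
    (hp : p ∈ ballPlus d) :
    WD d a b c β γ (psiDInv d a b c p) =
      (psiDInv d a b c p).2 * (p.2 ^ 2) ^ (β - 1 / 2) * (1 - ‖p.1‖ ^ 2 - p.2 ^ 2) ^ γ := by
  have hba : b - a ≠ 0 := (sub_pos.2 hab).ne'
  rw [WD, psiDInv_fst, psiDInv_snd_sq ha hab hc hp, psiDInvRadicand]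
  congr 3 <;> field_simp <;> ring

theorem abs_det_fderiv_psiDInv_mul_WD (ha : 0 ≤ a) (hab : a < b) (hc : 0 ≤ c) (β γ : ℝ)
    {p : Euc d × ℝ} (hp : p ∈ openBallPlus d) :
    |(fderiv ℝ (psiDInv d a b c) p).det| * WD d a b c β γ (psiDInv d a b c p) =
      (b - a) * (|p.2| ^ (2 * β) * (1 - ‖p.1‖ ^ 2 - p.2 ^ 2) ^ γ) := by
  have hR := psiDInvRadicand_pos ha hab hc hp
  have hT : 0 < √(psiDInvRadicand a b c p) := Real.sqrt_pos.2 hR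
  rw [det_fderiv_psiDInv hR, WD_psiDInv ha hab hc β γ (openBallPlus_subset_ballPlus hp),
    abs_of_pos (div_pos (mul_pos (sub_pos.2 hab) hp.2) hT), abs_of_pos hp.2,
    ← mul_rpow_sq_sub_half hp.2, psiDInv_snd]
  field_simp

end

theorem psiD_bijOn_and_integral_identity_general
    (d : ℕ) (a b c β γ : ℝ) (ha : 0 ≤ a) (hab : a < b) (hc : 0 ≤ c) :
    Set.BijOn (psiD d a b c) (LamD d a b c) (ballPlus d) ∧
    (∀ p ∈ LamD d a b c, psiDInv d a b c (psiD d a b c p) = p) ∧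
    (∀ p ∈ ballPlus d, psiD d a b c (psiDInv d a b c p) = p) ∧
    ∀ f : Euc d × ℝ → ℝ, Measurable f →
      IntegrableOn (fun p => f p * WD d a b c β γ p) (LamD d a b c) →
      ∫ p in LamD d a b c, f p * WD d a b c β γ p
        = (b - a) * ∫ p in ballPlus d,
            f (psiDInv d a b c p) *
              (|p.2| ^ (2 * β) * (1 - ‖p.1‖ ^ 2 - p.2 ^ 2) ^ γ) := by
  have hinv : Set.InvOn (psiDInv d a b c) (psiD d a b c) (LamD d a b c) (ballPlus d) :=
    ⟨psiDInv_psiD hab, psiD_psiDInv ha hab hc⟩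
  refine ⟨hinv.bijOn (mapsTo_psiD hab) (mapsTo_psiDInv ha hab hc), hinv.1, hinv.2,
    fun f _ _ => ?_⟩
  calc ∫ p in LamD d a b c, f p * WD d a b c β γ p
      = ∫ p in psiDInv d a b c '' openBallPlus d, f p * WD d a b c β γ p :=
        setIntegral_congr_set (psiDInv_image_openBallPlus_ae_eq ha hab hc).symm
    _ = ∫ p in openBallPlus d, |(fderiv ℝ (psiDInv d a b c) p).det| •
          (f (psiDInv d a b c p) * WD d a b c β γ (psiDInv d a b c p)) :=
        integral_image_eq_integral_abs_det_fderiv_smul volume measurableSet_openBallPlus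
          (fun p hp => (hasFDerivAt_psiDInv (psiDInvRadicand_pos ha hab hc hp).ne')
            |>.differentiableAt.hasFDerivAt.hasFDerivWithinAt)
          ((hinv.2.mono openBallPlus_subset_ballPlus).injOn) _
    _ = ∫ p in openBallPlus d, (b - a) * (f (psiDInv d a b c p) *
          (|p.2| ^ (2 * β) * (1 - ‖p.1‖ ^ 2 - p.2 ^ 2) ^ γ)) :=
        setIntegral_congr_fun measurableSet_openBallPlus fun p hp => by
          rw [smul_eq_mul, mul_left_comm, abs_det_fderiv_psiDInv_mul_WD ha hab hc β γ hp,
            mul_left_comm]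
    _ = (b - a) * ∫ p in ballPlus d, f (psiDInv d a b c p) *
          (|p.2| ^ (2 * β) * (1 - ‖p.1‖ ^ 2 - p.2 ^ 2) ^ γ) := by
        rw [setIntegral_congr_set openBallPlus_ae_eq_ballPlus, integral_const_mul]

/-- `ψ` is a bijection from `Λ^{d+1}_{a,b,c}` onto `B^{d+1}₊` with the
stated inverse, and the corresponding change-of-variables identity holds. -/
theorem psiD_bijOn_and_integral_identity
    (d : ℕ) (hd : 1 ≤ d) (a b c β γ : ℝ) (ha : 0 ≤ a) (hab : a < b) (hc : 0 ≤ c)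
    (hβ : -(1 : ℝ) / 2 < β) (hγ : -1 < γ) :
    Set.BijOn (psiD d a b c) (LamD d a b c) (ballPlus d) ∧
    (∀ p ∈ LamD d a b c, psiDInv d a b c (psiD d a b c p) = p) ∧
    (∀ p ∈ ballPlus d, psiD d a b c (psiDInv d a b c p) = p) ∧
    ∀ f : Euc d × ℝ → ℝ, Measurable f →
      IntegrableOn (fun p => f p * WD d a b c β γ p) (LamD d a b c) →
      ∫ p in LamD d a b c, f p * WD d a b c β γ p
        = (b - a) * ∫ p in ballPlus d,
            f (psiDInv d a b c p) *
              (|p.2| ^ (2 * β) * (1 - ‖p.1‖ ^ 2 - p.2 ^ 2) ^ γ) :=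
  psiD_bijOn_and_integral_identity_general d a b c β γ ha hab hc
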